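/- arXiv:2006.05231 — 2 statements merged into one kernel-verified Lean document; each statement's English description precedes it below -/
import Mathlib

section
/- Let $q \in (0,1)$. There exists a constant $C$ (depending only on $q$) such that for all integers $1 \le M_1 < M_2$, $\left(M_1^{-1} - M_2^{-1}\right)^{q-1} \sum_{n=M_1}^{M_2} n^{q-2} \le C$. -/
/-!
Put `p = 1 - q ∈ (0, 1)` and `tₙ = 1/n`. The tangent-line bound for the concave map
`t ↦ t ^ p` at `tₙ` gives `n ^ (q - 2) ≤ (2 / p) (tₙ ^ p - tₙ₊₁ ^ p)`, so the sum telescopes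
to at most `(2 / p) (t_{M₁} ^ p - t_{M₂+1} ^ p)`. Subadditivity of `t ^ p` bounds this by
`(2 / p) (t_{M₁} - t_{M₂+1}) ^ p ≤ (4 / p) (M₁⁻¹ - M₂⁻¹) ^ p`, which cancels the
prefactor; so `C = 4 / (1 - q)` works.
-/

open Finset

namespace Real

theorem mul_rpow_sub_one_mul_sub_le_rpow_sub_rpow {p a b : ℝ} (hp0 : 0 ≤ p) (hp1 : p ≤ 1)
    (ha : 0 < a) (hb : 0 ≤ b) : p * a ^ (p - 1) * (a - b) ≤ a ^ p - b ^ p := by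
  have bernoulli := rpow_one_add_le_one_add_mul_self (s := b / a - 1)
    (by linarith [div_nonneg hb ha.le]) hp0 hp1
  rw [add_sub_cancel, div_rpow hb ha.le, div_le_iff₀ (rpow_pos_of_pos ha p)] at bernoulli
  rw [rpow_sub_one ha.ne']
  have expand : (1 + p * (b / a - 1)) * a ^ p = a ^ p - p * (a ^ p / a) * (a - b) := by
    field_simp
    ring
  linarith

theorem rpow_sub_rpow_le_rpow_sub {p a b : ℝ} (hp0 : 0 ≤ p) (hp1 : p ≤ 1) (hb : 0 ≤ b)
    (hba : b ≤ a) : a ^ p - b ^ p ≤ (a - b) ^ p := by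
  have := rpow_add_le_add_rpow (sub_nonneg.2 hba) hb hp0 hp1
  rw [sub_add_cancel] at this
  linarith

end Real

open Real

theorem inv_sub_inv_add_one_le {a b : ℝ} (ha : 0 < a) (hab : a + 1 ≤ b) :
    a⁻¹ - (b + 1)⁻¹ ≤ 2 * (a⁻¹ - b⁻¹) := by
  have hb : 0 < b := by linarith
  rw [← sub_nonneg]
  have key : 2 * (a⁻¹ - b⁻¹) - (a⁻¹ - (b + 1)⁻¹) =
      ((b - a - 1) * b + 2 * (b - a)) / (a * b * (b + 1)) := by
    field_simp
    ring
  rw [key]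
  apply div_nonneg
  · nlinarith
  · positivity

theorem rpow_sub_two_le {q x : ℝ} (hq0 : 0 ≤ q) (hq1 : q < 1) (hx : 1 ≤ x) :
    x ^ (q - 2) ≤ 2 / (1 - q) * (x⁻¹ ^ (1 - q) - (x + 1)⁻¹ ^ (1 - q)) := by
  have hx0 : 0 < x := by linarith
  have tangent := mul_rpow_sub_one_mul_sub_le_rpow_sub_rpow (p := 1 - q) (by linarith)
    (by linarith) (inv_pos.2 hx0) (inv_nonneg.2 (by linarith : (0:ℝ) ≤ x + 1))
  rw [show 1 - q - 1 = -q by ring, rpow_neg (inv_nonneg.2 hx0.le), inv_rpow hx0.le,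
    inv_inv] at tangent
  have gap : x ^ (q - 2) ≤ 2 * (x ^ q * (x⁻¹ - (x + 1)⁻¹)) := by
    have hxq := rpow_pos_of_pos hx0 q
    rw [rpow_sub hx0, rpow_two]
    field_simp
    nlinarith
  calc x ^ (q - 2) ≤ 2 * (x ^ q * (x⁻¹ - (x + 1)⁻¹)) := gap
    _ = 2 / (1 - q) * ((1 - q) * x ^ q * (x⁻¹ - (x + 1)⁻¹)) := by
      field_simp [(by linarith : 1 - q ≠ 0)]
    _ ≤ 2 / (1 - q) * (x⁻¹ ^ (1 - q) - (x + 1)⁻¹ ^ (1 - q)) := by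
      gcongr

theorem sum_Icc_rpow_sub_two_le {q : ℝ} (hq0 : 0 ≤ q) (hq1 : q < 1) {M₁ M₂ : ℕ}
    (hM₁ : 1 ≤ M₁) (hM : M₁ ≤ M₂) :
    ∑ n ∈ Icc M₁ M₂, (n : ℝ) ^ (q - 2) ≤
      2 / (1 - q) * ((M₁ : ℝ)⁻¹ ^ (1 - q) - ((M₂ : ℝ) + 1)⁻¹ ^ (1 - q)) := by
  set g : ℕ → ℝ := fun n ↦ (n : ℝ)⁻¹ ^ (1 - q)
  calc ∑ n ∈ Icc M₁ M₂, (n : ℝ) ^ (q - 2)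
      ≤ ∑ n ∈ Icc M₁ M₂, 2 / (1 - q) * (g n - g (n + 1)) := by
        refine sum_le_sum fun n hn ↦ ?_
        have : (1 : ℝ) ≤ n := by exact_mod_cast hM₁.trans (mem_Icc.1 hn).1
        simpa [g] using rpow_sub_two_le hq0 hq1 this
    _ = 2 / (1 - q) * (g M₁ - g (M₂ + 1)) := by
        have telescope : ∑ n ∈ Icc M₁ M₂, (g n - g (n + 1)) = g M₁ - g (M₂ + 1) := by
          simpa only [neg_sub_neg] using sum_Icc_sub hM (fun n ↦ -g n)
        rw [← mul_sum, telescope]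
    _ = 2 / (1 - q) * ((M₁ : ℝ)⁻¹ ^ (1 - q) - ((M₂ : ℝ) + 1)⁻¹ ^ (1 - q)) := by
        simp [g]

theorem inv_rpow_sub_inv_add_one_rpow_le {p a b : ℝ} (hp0 : 0 ≤ p) (hp1 : p ≤ 1) (ha : 0 < a)
    (hab : a + 1 ≤ b) : a⁻¹ ^ p - (b + 1)⁻¹ ^ p ≤ 2 * (a⁻¹ - b⁻¹) ^ p := by
  have hba : (b + 1)⁻¹ ≤ a⁻¹ := inv_anti₀ ha (by linarith)
  have hgap : 0 ≤ a⁻¹ - b⁻¹ := sub_nonneg.2 (inv_anti₀ ha (by linarith))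
  calc a⁻¹ ^ p - (b + 1)⁻¹ ^ p ≤ (a⁻¹ - (b + 1)⁻¹) ^ p :=
        rpow_sub_rpow_le_rpow_sub hp0 hp1 (inv_nonneg.2 (by linarith)) hba
    _ ≤ (2 * (a⁻¹ - b⁻¹)) ^ p :=
        rpow_le_rpow (sub_nonneg.2 hba) (inv_sub_inv_add_one_le ha hab) hp0
    _ = 2 ^ p * (a⁻¹ - b⁻¹) ^ p := mul_rpow zero_le_two hgap
    _ ≤ 2 * (a⁻¹ - b⁻¹) ^ p := by
        gcongr
        simpa using rpow_le_rpow_of_exponent_le one_le_two hp1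

/-- For `q ∈ (0,1)` there is a constant `C` (depending only on `q`) such that for
all integers `1 ≤ M₁ < M₂`,
`(M₁⁻¹ - M₂⁻¹)^(q-1) * ∑_{n = M₁}^{M₂} n^(q-2) ≤ C` (real powers). -/
theorem stmt_9 (q : ℝ) (hq0 : 0 < q) (hq1 : q < 1) :
    ∃ C : ℝ, ∀ M₁ M₂ : ℕ, 1 ≤ M₁ → M₁ < M₂ →
      ((M₁ : ℝ)⁻¹ - (M₂ : ℝ)⁻¹) ^ (q - 1) *
          (∑ n ∈ Finset.Icc M₁ M₂, ((n : ℝ) ^ (q - 2))) ≤ C := by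
  refine ⟨4 / (1 - q), fun M₁ M₂ hM₁ hM ↦ ?_⟩
  have hM₁0 : (0 : ℝ) < M₁ := by exact_mod_cast hM₁
  set D : ℝ := (M₁ : ℝ)⁻¹ - (M₂ : ℝ)⁻¹
  have hD : 0 < D := sub_pos.2 (inv_strictAnti₀ hM₁0 (by exact_mod_cast hM))
  have hp : 0 < 1 - q := by linarith
  have hhead := inv_rpow_sub_inv_add_one_rpow_le (p := 1 - q) (b := M₂) hp.le (by linarith)
    hM₁0 (by exact_mod_cast hM)
  calc D ^ (q - 1) * ∑ n ∈ Icc M₁ M₂, (n : ℝ) ^ (q - 2)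
      ≤ D ^ (q - 1) * (2 / (1 - q) * (2 * D ^ (1 - q))) := by
        gcongr
        exact (sum_Icc_rpow_sub_two_le hq0.le hq1 hM₁ hM.le).trans (by gcongr)
    _ = 4 / (1 - q) * (D ^ (q - 1) * D ^ (1 - q)) := by ring
    _ = 4 / (1 - q) := by rw [← rpow_add hD]; simp
end

section
/- Let $([a_\alpha, b_\alpha])_{\alpha \in \mathbb{N}}$ be pairwise disjoint nondegenerate closed intervals in $\mathbb{R}$ with lengths $L_\alpha = b_\alpha - a_\alpha > 0$, and let $(\lambda_\alpha)$ be nonnegative reals with $0 < \sum_\alpha \lambda_\alpha < \infty$ and $\sum_\alpha \lambda_\alpha / L_\alpha < \infty$. Let $\nu = \sum_\alpha \lambda_\alpha \cdot \frac{1}{L_\alpha}\,\mathrm{Leb}|_{[a_\alpha, b_\alpha]}$, and define $r(x) = \min(x - a_\alpha, b_\alpha - x)$ for $x \in [a_\alpha, b_\alpha]$. Then $\sup_{\varepsilon > 0} \varepsilon^{-1}\, \nu(\{x : r(x) < \varepsilon\}) = \sum_\alpha \frac{2 \lambda_\alpha}{L_\alpha}$. -/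
open MeasureTheory Set
open scoped ENNReal BigOperators

/-- Exact computation of `Z_1` for a family of pairwise disjoint intervals carrying
uniform densities with weights `lam α`:
`sup_{ε>0} ε⁻¹ ν(r < ε) = ∑ α, 2 lam α / Lα`, where `Lα = bα - aα` and `r` is the
distance to the nearest endpoint of the interval containing the point. -/
theorem stmt_13 (a b : ℕ → ℝ) (hab : ∀ α, a α < b α)
    (hdisj : ∀ α β, α ≠ β → Disjoint (Icc (a α) (b α)) (Icc (a β) (b β)))
    (lam : ℕ → ℝ) (hlam : ∀ α, 0 ≤ lam α) (hlam_sum : Summable lam)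
    (hs_pos : 0 < ∑' α, lam α)
    (hL_sum : Summable (fun α => lam α / (b α - a α))) :
    (⨆ (ε : ℝ) (_ : 0 < ε),
        ENNReal.ofReal ε⁻¹ *
          (Measure.sum (fun α : ℕ =>
              (ENNReal.ofReal (lam α / (b α - a α))) • volume.restrict (Icc (a α) (b α)))
            (⋃ α : ℕ, {x | x ∈ Icc (a α) (b α) ∧ min (x - a α) (b α - x) < ε})))
      = ENNReal.ofReal (∑' α, 2 * lam α / (b α - a α)) := by
  have hLpos : ∀ α, 0 < b α - a α := fun α => sub_pos.2 (hab α)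
  set T : ℝ → ℕ → Set ℝ :=
    fun ε α => {x | x ∈ Icc (a α) (b α) ∧ min (x - a α) (b α - x) < ε} with hT
  have hTmeas : ∀ ε α, MeasurableSet (T ε α) := by
    intro ε α
    have h : T ε α = Icc (a α) (b α) ∩ {x | min (x - a α) (b α - x) < ε} := rfl
    rw [h]
    exact measurableSet_Icc.inter
      (measurableSet_lt (by fun_prop) measurable_const)
  have hUmeas : ∀ ε, MeasurableSet (⋃ α, T ε α) := fun ε => .iUnion (hTmeas ε)
  -- intersection of the union with one interval
  have hInter : ∀ ε α, (⋃ β, T ε β) ∩ Icc (a α) (b α) = T ε α := by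
    intro ε α
    apply Subset.antisymm
    · rintro x ⟨hx, hxα⟩
      obtain ⟨β, hβ⟩ := mem_iUnion.1 hx
      rcases eq_or_ne β α with rfl | hne
      · exact hβ
      · exact (Set.disjoint_left.1 (hdisj β α hne) hβ.1 hxα).elim
    · intro x hx
      exact ⟨mem_iUnion.2 ⟨α, hx⟩, hx.1⟩
  -- evaluation of the measure
  have hmu : ∀ ε, (Measure.sum (fun α : ℕ =>
        (ENNReal.ofReal (lam α / (b α - a α))) • volume.restrict (Icc (a α) (b α))))
        (⋃ α, T ε α)
      = ∑' α, ENNReal.ofReal (lam α / (b α - a α)) * volume (T ε α) := by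
    intro ε
    rw [Measure.sum_apply _ (hUmeas ε)]
    congr 1
    ext α
    rw [Measure.smul_apply, Measure.restrict_apply (hUmeas ε), hInter ε α, smul_eq_mul]
  -- upper bound for the volume of one piece
  have hvol_le : ∀ (ε : ℝ), 0 ≤ ε → ∀ α, volume (T ε α) ≤ ENNReal.ofReal (2 * ε) := by
    intro ε hε α
    have hsub : T ε α ⊆ Ico (a α) (a α + ε) ∪ Ioc (b α - ε) (b α) := by
      rintro x ⟨⟨hxa, hxb⟩, hmin⟩
      rcases min_lt_iff.1 hmin with h | h
      · exact Or.inl ⟨hxa, by linarith⟩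
      · exact Or.inr ⟨by linarith, hxb⟩
    calc volume (T ε α) ≤ volume (Ico (a α) (a α + ε) ∪ Ioc (b α - ε) (b α)) :=
          measure_mono hsub
      _ ≤ volume (Ico (a α) (a α + ε)) + volume (Ioc (b α - ε) (b α)) := measure_union_le _ _
      _ = ENNReal.ofReal (2 * ε) := by
          rw [Real.volume_Ico, Real.volume_Ioc, ← ENNReal.ofReal_add (by linarith) (by linarith)]
          congr 1; ring
  -- lower bound for small ε
  have hvol_ge : ∀ (ε : ℝ), 0 < ε → ∀ α, 2 * ε ≤ b α - a α →
      ENNReal.ofReal (2 * ε) ≤ volume (T ε α) := by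
    intro ε hε α hεL
    have hsub : Ico (a α) (a α + ε) ∪ Ioc (b α - ε) (b α) ⊆ T ε α := by
      rintro x (⟨h1, h2⟩ | ⟨h1, h2⟩)
      · exact ⟨⟨h1, by linarith⟩, min_lt_iff.2 (Or.inl (by linarith))⟩
      · exact ⟨⟨by linarith, h2⟩, min_lt_iff.2 (Or.inr (by linarith))⟩
    have hdj : Disjoint (Ico (a α) (a α + ε)) (Ioc (b α - ε) (b α)) := by
      rw [Set.disjoint_left]
      rintro x ⟨h1, h2⟩ ⟨h3, h4⟩
      linarith
    calc ENNReal.ofReal (2 * ε)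
        = volume (Ico (a α) (a α + ε) ∪ Ioc (b α - ε) (b α)) := by
          rw [measure_union hdj measurableSet_Ioc, Real.volume_Ico, Real.volume_Ioc,
            ← ENNReal.ofReal_add (by linarith) (by linarith)]
          congr 1; ring
      _ ≤ volume (T ε α) := measure_mono hsub
  -- per-term algebraic identity
  have hterm : ∀ (ε : ℝ), 0 < ε → ∀ α,
      ENNReal.ofReal ε⁻¹ * (ENNReal.ofReal (lam α / (b α - a α)) * ENNReal.ofReal (2 * ε))
        = ENNReal.ofReal (2 * lam α / (b α - a α)) := by
    intro ε hε α
    have h1 : ε ≠ 0 := hε.ne'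
    have h2 : b α - a α ≠ 0 := (hLpos α).ne'
    rw [← ENNReal.ofReal_mul (div_nonneg (hlam α) (hLpos α).le),
      ← ENNReal.ofReal_mul (inv_nonneg.2 hε.le)]
    congr 1
    field_simp
  have hnn : ∀ α, 0 ≤ 2 * lam α / (b α - a α) := by
    intro α; exact div_nonneg (by linarith [hlam α]) (hLpos α).le
  have hsum2 : Summable (fun α => 2 * lam α / (b α - a α)) := by
    simpa [mul_div_assoc] using hL_sum.mul_left 2
  rw [ENNReal.ofReal_tsum_of_nonneg hnn hsum2]
  apply le_antisymm
  · -- upper bound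
    apply iSup₂_le
    intro ε hε
    rw [hmu ε, ← ENNReal.tsum_mul_left]
    apply ENNReal.tsum_le_tsum
    intro α
    calc ENNReal.ofReal ε⁻¹ * (ENNReal.ofReal (lam α / (b α - a α)) * volume (T ε α))
        ≤ ENNReal.ofReal ε⁻¹ *
            (ENNReal.ofReal (lam α / (b α - a α)) * ENNReal.ofReal (2 * ε)) := by
          gcongr
          exact hvol_le ε hε.le α
      _ = ENNReal.ofReal (2 * lam α / (b α - a α)) := hterm ε hε α
  · -- lower bound
    rw [ENNReal.tsum_eq_iSup_sum]
    apply iSup_le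
    intro F
    rcases F.eq_empty_or_nonempty with rfl | hF
    · simp
    · set ε : ℝ := F.inf' hF (fun α => (b α - a α) / 2) with hεdef
      have hε : 0 < ε := by
        rw [hεdef, Finset.lt_inf'_iff]
        intro α _
        linarith [hLpos α]
      have hεL : ∀ α ∈ F, 2 * ε ≤ b α - a α := by
        intro α hα
        have := Finset.inf'_le (fun α => (b α - a α) / 2) hα
        rw [← hεdef] at this
        linarith
      apply le_iSup₂_of_le ε hε
      rw [hmu ε]
      calc ∑ α ∈ F, ENNReal.ofReal (2 * lam α / (b α - a α))
          ≤ ∑ α ∈ F, ENNReal.ofReal ε⁻¹ *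
              (ENNReal.ofReal (lam α / (b α - a α)) * volume (T ε α)) := by
            apply Finset.sum_le_sum
            intro α hα
            rw [← hterm ε hε α]
            gcongr
            exact hvol_ge ε hε α (hεL α hα)
        _ ≤ ∑' α, ENNReal.ofReal ε⁻¹ *
              (ENNReal.ofReal (lam α / (b α - a α)) * volume (T ε α)) :=
            ENNReal.sum_le_tsum F
        _ = ENNReal.ofReal ε⁻¹ *
              ∑' α, ENNReal.ofReal (lam α / (b α - a α)) * volume (T ε α) :=
            ENNReal.tsum_mul_left
end
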